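/- Let r ≥ 3 be an integer and m_1, …, m_r positive integers with s = m_1 + ⋯ + m_r. Then the multinomial coefficient s!/(m_1!⋯m_r!) equals the sum, over all ordered bipartitions (B_1, B_2) of {1, …, r} with 1 ∈ B_1, 2 ∈ B_2, 3 ∈ B_2 and B_2 = {1,…,r} \ B_1, of the product binom(s − r + 3, S(B_2) − |B_2| + 2) · C(B_1) · C(B_2). -/

import Mathlib

/-!
Write `z^{(k)}` for the rising factorial, `Q = {4, …, r}`, `A = B₁ \ {1} ⊆ Q`, `n_i = m_i - 1`
and `n_A = ∑_{i ∈ A} n_i`. Multiplied by `∏ m_i!`, the summand indexed by `A` becomes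
`N! · x (x + n_A + 1)^{(|A| - 1)} · (y + n_{Q \ A})^{(|Q \ A|)}` with `x = m₁`, `y = m₂ + m₃ + 1`
and `N = s - r + 3`. Summed over `A ⊆ Q`, this is the rising-factorial form of Hurwitz's
generalisation of Abel's identity, with value `(x + y + n_Q)^{(|Q|)} = (N + 1)^{(r - 3)}`; and
`N! (N + 1)^{(r - 3)} = s!`.

Hurwitz's identity goes by induction on `Q`. Since `z^{(k)} - (z - 1)^{(k)} = k z^{(k - 1)}`, the
backward differences in `y` of both sides obey the same recursion, so their difference is
`1`-periodic in `y`. At `y = -x - n_Q` the right side vanishes, and the left side is an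
alternating sum over `A ⊆ Q` of one polynomial of degree `|Q| - 1` evaluated at
`∑_{i ∈ A} (n_i + 1)`, which is zero.
-/

open Finset Polynomial
open scoped Nat

theorem Polynomial.degree_taylor_sub_lt {R : Type*} [CommRing R] {p : R[X]} (hp : p ≠ 0) (r : R) :
    (taylor r p - p).degree < p.degree :=
  degree_taylor p r ▸ degree_sub_lt_left (degree_taylor p r) ((taylor_eq_zero r p).not.mpr hp)
    (leadingCoeff_taylor r p)

theorem Polynomial.sum_powerset_neg_one_pow_card_mul_eval_sum_eq_zero {R ι : Type*} [CommRing R]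
    [DecidableEq ι] (c : ι → R) (Q : Finset ι) {p : R[X]} (hp : p.degree < #Q) :
    ∑ A ∈ Q.powerset, (-1) ^ #A * p.eval (∑ i ∈ A, c i) = 0 := by
  induction Q using Finset.induction_on generalizing p with
  | empty => simp_all
  | insert e Q he ih =>
    have hpair : ∀ A ∈ Q.powerset, (-1) ^ #A * p.eval (∑ i ∈ A, c i) +
        (-1) ^ #(insert e A) * p.eval (∑ i ∈ insert e A, c i) =
          -((-1) ^ #A * (taylor (c e) p - p).eval (∑ i ∈ A, c i)) := by
      intro A hA
      have heA : e ∉ A := fun h => he (mem_powerset.mp hA h)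
      rw [card_insert_of_notMem heA, sum_insert heA, eval_sub, taylor_eval, add_comm (c e)]
      ring
    have hdeg : (taylor (c e) p - p).degree < #Q := by
      rw [card_insert_of_notMem he, Nat.cast_add_one] at hp
      by_cases hp0 : p = 0
      · simp [hp0]
      · have hnat : p.natDegree ≤ #Q := Nat.lt_succ_iff.mp ((natDegree_lt_iff_degree_lt hp0).mpr hp)
        exact (degree_taylor_sub_lt hp0 _).trans_le (degree_le_of_natDegree_le hnat)
    rw [sum_powerset_insert he, ← sum_add_distrib, sum_congr rfl hpair, sum_neg_distrib, ih hdeg,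
      neg_zero]

theorem ascPochhammer_eval_sub_eval_sub_one {R : Type*} [CommRing R] (z : R) (k : ℕ) :
    (ascPochhammer R k).eval z - (ascPochhammer R k).eval (z - 1) =
      k * (ascPochhammer R (k - 1)).eval z := by
  cases k with
  | zero => simp
  | succ k =>
    rw [ascPochhammer_succ_eval, ascPochhammer_succ_left, eval_mul, eval_comp]
    simp only [eval_X, eval_add, eval_one, sub_add_cancel, Nat.add_sub_cancel]
    push_cast
    ring

noncomputable section Hurwitz

variable {ι : Type*} [DecidableEq ι] (x y : ℤ) (n : ι → ℤ)

/-- The Abel-type factor `x / (x + n_A) · (x + n_A)^{(|A|)}`, written without division. -/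
def abelFactor (A : Finset ι) : ℤ :=
  if A = ∅ then 1 else x * (ascPochhammer ℤ (#A - 1)).eval (x + ∑ i ∈ A, n i + 1)

def hurwitzSum (Q : Finset ι) : ℤ :=
  ∑ A ∈ Q.powerset, abelFactor x n A * (ascPochhammer ℤ #(Q \ A)).eval (y + ∑ i ∈ Q \ A, n i)

theorem hurwitzSum_sub_hurwitzSum_sub_one (Q : Finset ι) :
    hurwitzSum x y n Q - hurwitzSum x (y - 1) n Q =
      ∑ e ∈ Q, hurwitzSum x (y + n e) n (Q.erase e) := by
  let T (A : Finset ι) : ℤ :=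
    abelFactor x n A * (ascPochhammer ℤ (#(Q \ A) - 1)).eval (y + ∑ i ∈ Q \ A, n i)
  calc hurwitzSum x y n Q - hurwitzSum x (y - 1) n Q
      = ∑ A ∈ Q.powerset, ∑ _e ∈ Q \ A, T A := by
        rw [hurwitzSum, hurwitzSum, ← sum_sub_distrib]
        refine sum_congr rfl fun A _ => ?_
        rw [← mul_sub, sub_add_eq_add_sub, ascPochhammer_eval_sub_eval_sub_one, sum_const,
          nsmul_eq_mul]
        ring
    _ = ∑ e ∈ Q, ∑ A ∈ (Q.erase e).powerset, T A :=
        sum_comm' fun A e => by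
          simp only [mem_powerset, mem_sdiff, subset_erase]
          tauto
    _ = ∑ e ∈ Q, hurwitzSum x (y + n e) n (Q.erase e) := by
        refine sum_congr rfl fun e he => sum_congr rfl fun A hA => ?_
        have heA : e ∉ Q.erase e \ A := fun h => (mem_erase.mp (mem_sdiff.mp h).1).1 rfl
        have hsplit : Q \ A = insert e (Q.erase e \ A) := by
          rw [erase_sdiff_comm, insert_erase (mem_sdiff.mpr ⟨he, fun h => ?_⟩)]
          exact (mem_erase.mp (mem_powerset.mp hA h)).1 rfl
        simp only [T, hsplit, card_insert_of_notMem heA, sum_insert heA, Nat.add_sub_cancel,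
          add_assoc]

theorem abelFactor_mul_ascPochhammer_eval_neg (A : Finset ι) {k q : ℕ} (h : #A + k = q + 1) :
    abelFactor x n A * (ascPochhammer ℤ k).eval (-x - ∑ i ∈ A, n i) =
      (-1) ^ (q + 1) * x * ((-1) ^ #A *
        (descPochhammer ℤ q).eval (∑ i ∈ A, (n i + 1) + (x - 1))) := by
  have hsign : (-1 : ℤ) ^ (q + 1) * (-1) ^ #A = (-1) ^ k := by
    rw [← pow_add, ← h, show #A + k + #A = k + 2 * #A by ring, pow_add, pow_mul, neg_one_sq,
      one_pow, mul_one]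
  suffices hunsigned : abelFactor x n A * (descPochhammer ℤ k).eval (x + ∑ i ∈ A, n i) =
      x * (descPochhammer ℤ q).eval (∑ i ∈ A, (n i + 1) + (x - 1)) by
    rw [show -x - ∑ i ∈ A, n i = -(x + ∑ i ∈ A, n i) by ring,
      ascPochhammer_eval_neg_eq_descPochhammer]
    linear_combination (-1) ^ k * hunsigned -
      x * (descPochhammer ℤ q).eval (∑ i ∈ A, (n i + 1) + (x - 1)) * hsign
  rcases A.eq_empty_or_nonempty with rfl | hA
  · obtain rfl : k = q + 1 := by simpa using h
    simp [abelFactor, descPochhammer_succ_left, eval_comp]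
  · obtain ⟨a, ha⟩ : ∃ a, #A = a + 1 := ⟨#A - 1, by have := hA.card_pos; omega⟩
    obtain rfl : q = a + k := by omega
    have hdesc : (descPochhammer ℤ a).eval (x + ∑ i ∈ A, n i + a) =
        (ascPochhammer ℤ a).eval (x + ∑ i ∈ A, n i + 1) := by
      rw [descPochhammer_eval_eq_ascPochhammer]
      ring_nf
    rw [abelFactor, if_neg hA.ne_empty, ha, Nat.add_sub_cancel, ← descPochhammer_mul, eval_mul,
      eval_comp, sum_add_distrib, sum_const, ha, nsmul_one, ← hdesc]
    simp only [eval_sub, eval_X, eval_natCast]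
    push_cast
    ring_nf

theorem hurwitzSum_neg_eq_zero {Q : Finset ι} (hQ : Q.Nonempty) :
    hurwitzSum x (-x - ∑ i ∈ Q, n i) n Q = 0 := by
  obtain ⟨q, hq⟩ : ∃ q, #Q = q + 1 := ⟨#Q - 1, by have := hQ.card_pos; omega⟩
  have hdeg : (taylor (x - 1) (descPochhammer ℤ q)).degree < #Q := by
    rw [degree_taylor, degree_eq_natDegree (monic_descPochhammer ℤ q).ne_zero,
      descPochhammer_natDegree, hq]
    exact_mod_cast q.lt_succ_self
  calc hurwitzSum x (-x - ∑ i ∈ Q, n i) n Q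
      = (-1) ^ (q + 1) * x * ∑ A ∈ Q.powerset,
          (-1) ^ #A * (taylor (x - 1) (descPochhammer ℤ q)).eval (∑ i ∈ A, (n i + 1)) := by
        rw [hurwitzSum, mul_sum]
        refine sum_congr rfl fun A hA => ?_
        have hAQ := mem_powerset.mp hA
        rw [taylor_eval, ← abelFactor_mul_ascPochhammer_eval_neg x n A
          (by rw [add_comm, card_sdiff_add_card_eq_card hAQ, hq]), ← sum_sdiff hAQ]
        ring_nf
    _ = 0 := by rw [sum_powerset_neg_one_pow_card_mul_eval_sum_eq_zero _ _ hdeg, mul_zero]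

theorem hurwitzSum_eq (Q : Finset ι) :
    hurwitzSum x y n Q = (ascPochhammer ℤ #Q).eval (x + y + ∑ i ∈ Q, n i) := by
  induction Q using Finset.strongInduction generalizing y with | H Q ih => ?_
  rcases Q.eq_empty_or_nonempty with rfl | hQ
  · simp [hurwitzSum, abelFactor]
  set F : ℤ → ℤ := fun y =>
    hurwitzSum x y n Q - (ascPochhammer ℤ #Q).eval (x + y + ∑ i ∈ Q, n i) with hF
  have hperiodic : Function.Periodic F 1 := fun y => by
    have hlhs := hurwitzSum_sub_hurwitzSum_sub_one x (y + 1) n Q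
    have hterm : ∀ e ∈ Q, hurwitzSum x (y + 1 + n e) n (Q.erase e) =
        (ascPochhammer ℤ (#Q - 1)).eval (x + (y + 1) + ∑ i ∈ Q, n i) := fun e he => by
      rw [ih _ (erase_ssubset he), card_erase_of_mem he, ← add_sum_erase Q n he]
      ring_nf
    rw [sum_congr rfl hterm, sum_const, nsmul_eq_mul, add_sub_cancel_right] at hlhs
    have hrhs := ascPochhammer_eval_sub_eval_sub_one (x + (y + 1) + ∑ i ∈ Q, n i) #Q
    rw [show x + (y + 1) + ∑ i ∈ Q, n i - 1 = x + y + ∑ i ∈ Q, n i by ring] at hrhs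
    simp only [hF]
    linear_combination hlhs - hrhs
  have hbase : F (-x - ∑ i ∈ Q, n i) = 0 := by
    simp only [hF]
    rw [hurwitzSum_neg_eq_zero x n hQ, show x + (-x - ∑ i ∈ Q, n i) + ∑ i ∈ Q, n i = 0 by ring,
      ascPochhammer_ne_zero_eval_zero ℤ hQ.card_pos.ne', sub_zero]
  have hconst := (hperiodic.int_mul_eq y).trans (hperiodic.int_mul_eq (-x - ∑ i ∈ Q, n i)).symm
  rw [mul_one, mul_one, Int.cast_id, Int.cast_id, hbase] at hconst
  exact sub_eq_zero.mp hconst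

end Hurwitz

theorem factorial_mul_ascPochhammer_eval_add_one (b k : ℕ) :
    (b ! : ℤ) * (ascPochhammer ℤ k).eval ((b : ℤ) + 1) = ((b + k)! : ℤ) := by
  rw [← Nat.cast_add_one, ascPochhammer_nat_eq_natCast_ascFactorial, ← Nat.cast_mul,
    Nat.factorial_mul_ascFactorial]

section Factorials

variable {ι : Type*} [DecidableEq ι]

theorem abelFactor_mul_factorial (p : ℕ) (n : ι → ℕ) (A : Finset ι) :
    abelFactor ((p : ℤ) + 1) (fun i => (n i : ℤ)) A * ((p + 1 + ∑ i ∈ A, n i)! : ℤ) =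
      (p + 1) * ((p + ∑ i ∈ A, n i + #A)! : ℤ) := by
  rcases A.eq_empty_or_nonempty with rfl | hA
  · simp [abelFactor, Nat.factorial_succ]
  · obtain ⟨a, ha⟩ : ∃ a, #A = a + 1 := ⟨#A - 1, by have := hA.card_pos; omega⟩
    have harg : (p : ℤ) + 1 + ∑ i ∈ A, (n i : ℤ) + 1 = ((p + 1 + ∑ i ∈ A, n i : ℕ) : ℤ) + 1 := by
      push_cast; ring
    rw [abelFactor, if_neg hA.ne_empty, ha, Nat.add_sub_cancel, harg, mul_assoc,
      mul_comm (eval _ _), factorial_mul_ascPochhammer_eval_add_one,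
      show p + 1 + ∑ i ∈ A, n i + a = p + ∑ i ∈ A, n i + (a + 1) by ring]

theorem sum_powerset_choose_mul_factorial_mul_factorial (p u : ℕ) (n : ι → ℕ) (Q : Finset ι) :
    ∑ A ∈ Q.powerset, (p + 1 + u + ∑ i ∈ Q, n i).choose (u + ∑ i ∈ Q \ A, n i) *
        (p + ∑ i ∈ A, n i + #A)! * (u + ∑ i ∈ Q \ A, n i + #(Q \ A))! * (p + 1) =
      (p + 1 + u + ∑ i ∈ Q, n i + #Q)! := by
  set N := p + 1 + u + ∑ i ∈ Q, n i
  have hterm : ∀ A ∈ Q.powerset,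
      ((N.choose (u + ∑ i ∈ Q \ A, n i) * (p + ∑ i ∈ A, n i + #A)! *
        (u + ∑ i ∈ Q \ A, n i + #(Q \ A))! * (p + 1) : ℕ) : ℤ) =
      N ! * (abelFactor ((p : ℤ) + 1) (fun i => (n i : ℤ)) A *
        (ascPochhammer ℤ #(Q \ A)).eval ((u : ℤ) + 1 + ∑ i ∈ Q \ A, (n i : ℤ))) := by
    intro A hA
    set b := u + ∑ i ∈ Q \ A, n i
    have hNb : N = b + (p + 1 + ∑ i ∈ A, n i) := by
      simp only [N, b, ← sum_sdiff (mem_powerset.mp hA)]; ring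
    have habel := abelFactor_mul_factorial p n A
    have hpoch := factorial_mul_ascPochhammer_eval_add_one b #(Q \ A)
    have harg : (u : ℤ) + 1 + ∑ i ∈ Q \ A, (n i : ℤ) = (b : ℤ) + 1 := by push_cast [b]; ring
    rw [harg, ← Nat.choose_mul_factorial_mul_factorial (show b ≤ N by omega),
      show N - b = p + 1 + ∑ i ∈ A, n i by omega]
    push_cast at hpoch ⊢
    linear_combination (-(N.choose b : ℤ) * ((b + #(Q \ A))! : ℤ)) * habel -
      ((N.choose b : ℤ) * abelFactor ((p : ℤ) + 1) (fun i => (n i : ℤ)) A *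
        ((p + 1 + ∑ i ∈ A, n i)! : ℤ)) * hpoch
  have hsum := hurwitzSum_eq ((p : ℤ) + 1) ((u : ℤ) + 1) (fun i => (n i : ℤ)) Q
  rw [show (p : ℤ) + 1 + ((u : ℤ) + 1) + ∑ i ∈ Q, (n i : ℤ) = (N : ℤ) + 1 by push_cast [N]; ring]
    at hsum
  have hcast := congrArg (fun t => (N ! : ℤ) * t) hsum
  simp only [hurwitzSum, mul_sum, factorial_mul_ascPochhammer_eval_add_one] at hcast
  rw [← sum_congr rfl hterm] at hcast
  exact_mod_cast hcast

end Factorials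

theorem Nat.multinomial_mul_multinomial_sdiff_mul_prod_factorial {α : Type*} [DecidableEq α]
    {B I : Finset α} (hB : B ⊆ I) (f : α → ℕ) :
    Nat.multinomial B f * Nat.multinomial (I \ B) f * ∏ i ∈ I, (f i)! =
      (∑ i ∈ B, f i)! * (∑ i ∈ I \ B, f i)! := by
  rw [← prod_sdiff hB, ← Nat.multinomial_spec B f, ← Nat.multinomial_spec (I \ B) f]
  ring

theorem sum_eq_sum_sub_one_add_card {α : Type*} {A : Finset α} {f : α → ℕ}
    (hf : ∀ i ∈ A, 0 < f i) : ∑ i ∈ A, f i = ∑ i ∈ A, (f i - 1) + #A := by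
  rw [card_eq_sum_ones, ← sum_add_distrib]
  exact sum_congr rfl fun i hi => (Nat.sub_add_cancel (hf i hi)).symm

theorem sum_eq_sum_add_one_of_eq_add_one {α : Type*} [DecidableEq α] {I : Finset α} {a : α}
    (ha : a ∈ I) {f g : α → ℕ} (hfa : f a = g a + 1) (hfg : ∀ i ∈ I.erase a, f i = g i) :
    ∑ i ∈ I, f i = ∑ i ∈ I, g i + 1 := by
  rw [← add_sum_erase _ _ ha, ← add_sum_erase _ g ha, sum_congr rfl hfg, hfa]
  ring

theorem prod_factorial_eq_mul_prod_factorial_of_eq_add_one {α : Type*} [DecidableEq α]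
    {I : Finset α} {a : α} (ha : a ∈ I) {f g : α → ℕ} (hfa : f a = g a + 1)
    (hfg : ∀ i ∈ I.erase a, f i = g i) :
    ∏ i ∈ I, (f i)! = (g a + 1) * ∏ i ∈ I, (g i)! := by
  rw [← mul_prod_erase _ _ ha, ← mul_prod_erase _ (fun i => (g i)!) ha,
    prod_congr rfl fun i hi => congrArg Nat.factorial (hfg i hi), hfa, Nat.factorial_succ,
    mul_assoc]

theorem Icc_one_eq_insert {r : ℕ} (hr : 3 ≤ r) :
    Icc 1 r = insert 1 (insert 2 (insert 3 (Icc 4 r))) := by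
  ext i
  simp only [mem_Icc, mem_insert]
  omega

theorem Icc_one_sdiff_insert_one {r : ℕ} (hr : 3 ≤ r) {A : Finset ℕ} (hA : A ⊆ Icc 4 r) :
    Icc 1 r \ insert 1 A = insert 2 (insert 3 (Icc 4 r \ A)) := by
  ext i
  have hiA := @hA i
  simp only [mem_sdiff, mem_Icc, mem_insert] at hiA ⊢
  by_cases h : i ∈ A
  · have := hiA h
    simp only [h, not_true_eq_false, or_true, and_false, or_false, false_iff]
    omega
  · simp only [h, or_false, not_false_eq_true, and_true]
    omega

theorem filter_powerset_Icc_one_eq_image {r : ℕ} (hr : 3 ≤ r) :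
    (Icc 1 r).powerset.filter (fun B => 1 ∈ B ∧ 2 ∉ B ∧ 3 ∉ B) =
      (Icc 4 r).powerset.image (insert 1) := by
  ext B
  simp only [mem_filter, mem_powerset, mem_image]
  constructor
  · rintro ⟨hB, h1, h2, h3⟩
    refine ⟨B.erase 1, fun i hi => ?_, insert_erase h1⟩
    have hiB := mem_of_mem_erase hi
    have := hB hiB
    simp only [mem_Icc] at this ⊢
    have : i ≠ 1 := ne_of_mem_erase hi
    have : i ≠ 2 := fun h => h2 (h ▸ hiB)
    have : i ≠ 3 := fun h => h3 (h ▸ hiB)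
    omega
  · rintro ⟨A, hA, rfl⟩
    have h4 : ∀ i ∈ A, 4 ≤ i := fun i hi => (mem_Icc.mp (hA hi)).1
    refine ⟨insert_subset (by simp; omega) (hA.trans (Icc_subset_Icc_left (by norm_num))),
      mem_insert_self 1 A, ?_, ?_⟩ <;>
    · rw [mem_insert, not_or]
      exact ⟨by norm_num, fun h => by have := h4 _ h; omega⟩

theorem sum_filter_powerset_Icc_one {M : Type*} [AddCommMonoid M] {r : ℕ} (hr : 3 ≤ r)
    (f : Finset ℕ → M) :
    ∑ B ∈ (Icc 1 r).powerset.filter (fun B => 1 ∈ B ∧ 2 ∉ B ∧ 3 ∉ B), f B =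
      ∑ A ∈ (Icc 4 r).powerset, f (insert 1 A) := by
  rw [filter_powerset_Icc_one_eq_image hr, sum_image]
  exact insert_erase_invOn.2.injOn.mono fun A hA => notMem_mono (mem_powerset.1 hA) (by simp)

theorem sum_Icc_one_eq {r : ℕ} (hr : 3 ≤ r) {g : ℕ → ℕ} (hg : ∀ i ∈ Icc 4 r, 0 < g i) :
    ∑ i ∈ Icc 1 r, g i = g 1 + (g 2 + g 3) + ∑ i ∈ Icc 4 r, (g i - 1) + #(Icc 4 r) := by
  rw [Icc_one_eq_insert hr, sum_insert (by simp), sum_insert (by simp), sum_insert (by simp),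
    sum_eq_sum_sub_one_add_card hg]
  ring

theorem choose_mul_multinomial_mul_multinomial_mul_prod_factorial {r : ℕ} (hr : 3 ≤ r)
    {g : ℕ → ℕ} (hg : ∀ i ∈ Icc 2 r, 0 < g i) {A : Finset ℕ} (hA : A ⊆ Icc 4 r) (N : ℕ) :
    N.choose ((∑ i ∈ Icc 1 r \ insert 1 A, g i) - #(Icc 1 r \ insert 1 A) + 2) *
        Nat.multinomial (insert 1 A) g * Nat.multinomial (Icc 1 r \ insert 1 A) g *
        ((g 1 + 1) * ∏ i ∈ Icc 1 r, (g i)!) =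
      N.choose (g 2 + g 3 + ∑ i ∈ Icc 4 r \ A, (g i - 1)) * (g 1 + ∑ i ∈ A, (g i - 1) + #A)! *
        (g 2 + g 3 + ∑ i ∈ Icc 4 r \ A, (g i - 1) + #(Icc 4 r \ A))! * (g 1 + 1) := by
  have hsum : ∀ B ⊆ Icc 4 r, ∑ i ∈ B, g i = ∑ i ∈ B, (g i - 1) + #B := fun B hB =>
    sum_eq_sum_sub_one_add_card fun i hi => hg i (Icc_subset_Icc_left (by norm_num) (hB hi))
  have hg2 := hg 2 (by simp only [mem_Icc]; omega)
  have hg3 := hg 3 (by simp only [mem_Icc]; omega)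
  have h1A : 1 ∉ A := fun h => by simpa using hA h
  have h2 : 2 ∉ insert 3 (Icc 4 r \ A) := by simp
  have h3 : 3 ∉ Icc 4 r \ A := by simp
  have hB1 : insert 1 A ⊆ Icc 1 r :=
    insert_subset (by simp only [mem_Icc]; omega) (hA.trans (Icc_subset_Icc_left (by norm_num)))
  calc _ = N.choose ((∑ i ∈ Icc 1 r \ insert 1 A, g i) - #(Icc 1 r \ insert 1 A) + 2) *
          (Nat.multinomial (insert 1 A) g * Nat.multinomial (Icc 1 r \ insert 1 A) g *
            ∏ i ∈ Icc 1 r, (g i)!) * (g 1 + 1) := by ring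
    _ = N.choose ((∑ i ∈ Icc 1 r \ insert 1 A, g i) - #(Icc 1 r \ insert 1 A) + 2) *
          ((∑ i ∈ insert 1 A, g i)! * (∑ i ∈ Icc 1 r \ insert 1 A, g i)!) * (g 1 + 1) := by
      rw [Nat.multinomial_mul_multinomial_sdiff_mul_prod_factorial hB1]
    _ = _ := by
      rw [Icc_one_sdiff_insert_one hr hA, sum_insert h1A, sum_insert h2, sum_insert h3,
        card_insert_of_notMem h2, card_insert_of_notMem h3, hsum A hA, hsum _ sdiff_subset,
        show g 2 + (g 3 + (∑ i ∈ Icc 4 r \ A, (g i - 1) + #(Icc 4 r \ A))) -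
            (#(Icc 4 r \ A) + 1 + 1) + 2 = g 2 + g 3 + ∑ i ∈ Icc 4 r \ A, (g i - 1) by omega]
      ring_nf

/-- **Third identity on multinomial coefficients.**
For `r ≥ 3` and positive integers `m 1, …, m r` with `s = m 1 + ⋯ + m r`,
setting `g 1 = m 1 - 1` and `g i = m i` for `2 ≤ i`, the multinomial coefficient
`s! / (m 1 ! ⋯ m r !)` equals the sum over all ordered bipartitions `(B₁, B₂)` of
`{1, …, r}` with `1 ∈ B₁`, `2 ∈ B₂`, `3 ∈ B₂`, and `B₂ = {1,…,r} \ B₁` of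
`choose (s - r + 3) (S(B₂) - |B₂| + 2) * C(B₁) * C(B₂)`, where `S(B) = ∑_{i∈B} g i`
and `C(B) = S(B)! / ∏_{i∈B} (g i)!`. -/
theorem multinomial_identity_three
    (r : ℕ) (hr : 3 ≤ r) (m : ℕ → ℕ) (hm : ∀ i ∈ Finset.Icc 1 r, 0 < m i)
    (s : ℕ) (hs : s = ∑ i ∈ Finset.Icc 1 r, m i)
    (g : ℕ → ℕ) (hg1 : g 1 = m 1 - 1) (hg2 : ∀ i, 2 ≤ i → g i = m i) :
    s.factorial / ∏ i ∈ Finset.Icc 1 r, (m i).factorial =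
      ∑ B1 ∈ (Finset.Icc 1 r).powerset.filter (fun B => 1 ∈ B ∧ 2 ∉ B ∧ 3 ∉ B),
        (s - r + 3).choose
            ((∑ i ∈ Finset.Icc 1 r \ B1, g i) - (Finset.Icc 1 r \ B1).card + 2) *
          ((∑ i ∈ B1, g i).factorial / ∏ i ∈ B1, (g i).factorial) *
          ((∑ i ∈ Finset.Icc 1 r \ B1, g i).factorial /
            ∏ i ∈ Finset.Icc 1 r \ B1, (g i).factorial) := by
  have h1 : 1 ∈ Icc 1 r := by simp only [mem_Icc]; omega
  have hm1 : m 1 = g 1 + 1 := by have := hm 1 h1; omega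
  have hgm : ∀ i ∈ (Icc 1 r).erase 1, m i = g i := fun i hi => by
    have := mem_Icc.mp (mem_of_mem_erase hi)
    exact (hg2 i (by have := ne_of_mem_erase hi; omega)).symm
  have hg : ∀ i ∈ Icc 2 r, 0 < g i := fun i hi => by
    have := mem_Icc.mp hi
    rw [hg2 i this.1]
    exact hm i (mem_Icc.mpr ⟨by omega, this.2⟩)
  have hsum := hs.trans (sum_eq_sum_add_one_of_eq_add_one h1 hm1 hgm)
  simp only [← Nat.multinomial.eq_1]
  rw [sum_filter_powerset_Icc_one hr]
  refine Nat.div_eq_of_eq_mul_left (Nat.prod_factorial_pos _ _) ?_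
  rw [sum_mul, prod_factorial_eq_mul_prod_factorial_of_eq_add_one h1 hm1 hgm,
    sum_congr rfl fun A hA =>
      choose_mul_multinomial_mul_multinomial_mul_prod_factorial hr hg (mem_powerset.mp hA) _]
  have hs' := sum_Icc_one_eq hr fun i hi => hg i (Icc_subset_Icc_left (by norm_num) hi)
  have hr' : #(Icc 4 r) + 3 = r := by simp only [Nat.card_Icc]; omega
  have hg23 : 0 < g 2 ∧ 0 < g 3 :=
    ⟨hg 2 (by simp only [mem_Icc]; omega), hg 3 (by simp only [mem_Icc]; omega)⟩
  rw [show s - r + 3 = g 1 + 1 + (g 2 + g 3) + ∑ i ∈ Icc 4 r, (g i - 1) by omega,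
    show s = g 1 + 1 + (g 2 + g 3) + ∑ i ∈ Icc 4 r, (g i - 1) + #(Icc 4 r) by omega]
  exact (sum_powerset_choose_mul_factorial_mul_factorial _ _ (fun i => g i - 1) _).symm
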